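/- arXiv:1703.03963 — 6 statements merged into one kernel-verified Lean document; each statement's English description precedes it below -/
import Mathlib

section
/- Let G be a bipartite graph with parts of equal size n and maximum degree at most 2. If iteratively deleting vertices of degree 1 together with their unique neighbor eventually produces a vertex of degree 0, then G has no perfect matching. -/
/-- Bipartite graph with equal parts of size `n`, degrees at most 2.  If iteratively deleting
a vertex of degree 1 together with its unique neighbor eventually produces a vertex of
degree 0, then `G` has no perfect matching. -/
theorem stmt_5 {V : Type*} [Fintype V] (G : SimpleGraph V) (A : Set V) (n : ℕ)
    (hbip : ∀ v w, G.Adj v w → (v ∈ A ↔ w ∉ A))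
    (hA : A.ncard = n) (hB : (Aᶜ : Set V).ncard = n)
    (hdeg : ∀ v, (G.neighborSet v).ncard ≤ 2)
    (k : ℕ) (S : ℕ → Set V) (h0 : S 0 = Set.univ)
    (hstep : ∀ i < k, ∃ z y, z ∈ S i ∧ y ∈ S i ∧
      G.neighborSet z ∩ S i = {y} ∧ S (i + 1) = S i \ {z, y})
    (hend : ∃ z ∈ S k, G.neighborSet z ∩ S k = ∅) :
    ¬ ∃ M : G.Subgraph, M.IsPerfectMatching := by
  rintro ⟨M, hM⟩
  rw [SimpleGraph.Subgraph.isPerfectMatching_iff] at hM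
  -- Invariant: matched partners stay inside S i, for all i ≤ k.
  have key : ∀ i ≤ k, ∀ v ∈ S i, ∀ w, M.Adj v w → w ∈ S i := by
    intro i
    induction i with
    | zero => intro _ v _ w _; rw [h0]; trivial
    | succ i ih =>
      intro hik v hv w hvw
      have hik' : i < k := Nat.lt_of_succ_le hik
      obtain ⟨z, y, hz, hy, huniq, hS⟩ := hstep i hik'
      have ih' := ih (le_of_lt hik')
      rw [hS] at hv
      have hvSi : v ∈ S i := hv.1
      have hvne : v ≠ z ∧ v ≠ y := by
        have := hv.2
        simp only [Set.mem_insert_iff, Set.mem_singleton_iff] at this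
        exact ⟨fun h => this (Or.inl h), fun h => this (Or.inr h)⟩
      have hwSi : w ∈ S i := ih' v hvSi w hvw
      -- partner of z is y
      obtain ⟨wz, hwz, huz⟩ := hM z
      have hwzy : wz = y := by
        have h1 : wz ∈ G.neighborSet z ∩ S i :=
          ⟨M.adj_sub hwz, ih' z hz wz hwz⟩
        rw [huniq] at h1
        exact h1
      have hMzy : M.Adj z y := hwzy ▸ hwz
      rw [hS]
      refine ⟨hwSi, ?_⟩
      simp only [Set.mem_insert_iff, Set.mem_singleton_iff]
      rintro (h | h)
      · -- w = z : then v = y by uniqueness at z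
        subst h
        have hvy : v = y := by
          have := huz v hvw.symm
          rw [this, hwzy]
        exact hvne.2 hvy
      · -- w = y : then v = z by uniqueness at y
        subst h
        obtain ⟨wy, hwy, huy⟩ := hM w
        have h1 : z = wy := huy z hMzy.symm
        have h2 : v = wy := huy v hvw.symm
        exact hvne.1 (h2.trans h1.symm)
  obtain ⟨z, hzk, hempty⟩ := hend
  obtain ⟨w, hw, _⟩ := hM z
  have : w ∈ G.neighborSet z ∩ S k := ⟨M.adj_sub hw, key k le_rfl z hzk w hw⟩
  rw [hempty] at this
  exact this
end

section
/- Let G be a bipartite graph with parts of equal size and maximum degree at most 2 admitting a perfect matching, and let G' be the graph obtained by iteratively removing all special edges (edges in every perfect matching) together with their endpoints and deleting edges incident to removed vertices. Then every vertex of G' incident to an edge of some perfect matching has degree exactly 2 in the subgraph of edges lying in some perfect matching. -/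
/-- `K` is the subgraph of edges of `G` lying in some perfect matching; `H` is `K` minus the
special edges (those lying in every perfect matching), i.e. the graph `G'` obtained after
removing special edges with their endpoints.  Every vertex of `G'` incident to an edge of some
perfect matching has degree exactly 2 in `K`. -/
theorem stmt_6 {V : Type*} [Fintype V] (G K H : SimpleGraph V) (A : Set V) (n : ℕ)
    (hbip : ∀ v w, G.Adj v w → (v ∈ A ↔ w ∉ A))
    (hA : A.ncard = n) (hB : (Aᶜ : Set V).ncard = n)
    (hdeg : ∀ v, (G.neighborSet v).ncard ≤ 2)
    (hpm : ∃ M : G.Subgraph, M.IsPerfectMatching)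
    (hK : ∀ v w, K.Adj v w ↔ G.Adj v w ∧
      ∃ M : G.Subgraph, M.IsPerfectMatching ∧ M.Adj v w)
    (hH : ∀ v w, H.Adj v w ↔ K.Adj v w ∧
      ¬ (∀ M : G.Subgraph, M.IsPerfectMatching → M.Adj v w)) :
    ∀ v, (∃ w, H.Adj v w) → (K.neighborSet v).ncard = 2 := by
  intro v ⟨w, hvw⟩
  classical
  rw [hH] at hvw
  obtain ⟨hKvw, hnot⟩ := hvw
  push_neg at hnot
  obtain ⟨M', hM', hM'vw⟩ := hnot
  -- M' matches v to some w'
  have hv : v ∈ M'.verts := hM'.2 v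
  obtain ⟨w', hw', _⟩ := hM'.1 hv
  have hKvw' : K.Adj v w' := (hK v w').2 ⟨M'.adj_sub hw', M', hM', hw'⟩
  have hne : w' ≠ w := fun h => hM'vw (h ▸ hw')
  have hsub : ({w, w'} : Set V) ⊆ K.neighborSet v := by
    rintro x (rfl | rfl)
    · exact hKvw
    · exact hKvw'
  have hsubG : K.neighborSet v ⊆ G.neighborSet v := fun x hx => ((hK v x).1 hx).1
  have h2 : 2 ≤ (K.neighborSet v).ncard := by
    have := Set.ncard_le_ncard hsub (Set.toFinite _)
    rwa [Set.ncard_pair hne.symm] at this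
  have hle : (K.neighborSet v).ncard ≤ 2 :=
    le_trans (Set.ncard_le_ncard hsubG (Set.toFinite _)) (hdeg v)
  omega
end

section
/- The number of perfect matchings of a bipartite graph with parts of size n and maximum degree at most 2 is at most 2^⌊n/2⌋, and this bound is attained for every even n. -/
/-!
Count the perfect matchings of `G[U]` (`matchingsOn G U`) by strong induction on `k = |U ∩ A|`,
taking some `a ∈ U ∩ A`. If `a` has at most one neighbour `b` in `U`, the edge `ab` is forced and
deleting `a, b` removes a vertex of `A`. If `a` has two neighbours `b, b'` in `U`, branch on the
partner `b` of `a`: since `b'` has degree at most 2, it has at most one neighbour `a₂ ∈ A` left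
besides `a`, so `b'a₂` is forced too and deleting `a, b, b', a₂` removes two vertices of `A`.
Thus the count `f k` satisfies `f k ≤ max (f (k - 1)) (2 * f (k - 2))`, whence `f k ≤ 2 ^ (k / 2)`.
For `n = 2m` the bound is attained by `m` disjoint 4-cycles, each with two perfect matchings.
-/

namespace SimpleGraph

variable {V : Type*} {G : SimpleGraph V}

namespace Subgraph

lemma IsMatching.adj_left_iff {M : G.Subgraph} (hM : M.IsMatching) {x y z : V}
    (hxy : M.Adj x y) : M.Adj x z ↔ z = y :=
  ⟨fun hxz => hM.eq_of_adj_left hxz hxy, fun h => h ▸ hxy⟩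

lemma IsMatching.deleteVerts_pair {M : G.Subgraph} (hM : M.IsMatching) {x y : V}
    (hxy : M.Adj x y) : (M.deleteVerts {x, y}).IsMatching := by
  rintro v ⟨hv, hvxy⟩
  obtain ⟨w, hvw, huniq⟩ := hM hv
  have hw : w ∉ ({x, y} : Set V) := by
    rintro (rfl | rfl)
    · exact hvxy (Or.inr (hM.eq_of_adj_right hvw hxy.symm))
    · exact hvxy (Or.inl (hM.eq_of_adj_right hvw hxy))
  exact ⟨w, deleteVerts_adj.mpr ⟨hv, hvxy, M.edge_vert hvw.symm, hw, hvw⟩,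
    fun z hz => huniq z (deleteVerts_adj.mp hz).2.2.2.2⟩

lemma ext_of_deleteVerts_eq {M₁ M₂ : G.Subgraph} {S : Set V} (hverts : M₁.verts = M₂.verts)
    (hS : ∀ x ∈ S, ∀ y, M₁.Adj x y ↔ M₂.Adj x y)
    (hdel : M₁.deleteVerts S = M₂.deleteVerts S) : M₁ = M₂ := by
  refine Subgraph.ext hverts (funext₂ fun x y => propext ?_)
  by_cases hx : x ∈ S
  · exact hS x hx y
  by_cases hy : y ∈ S
  · rw [M₁.adj_comm, M₂.adj_comm]
    exact hS y hy x
  have key : ∀ M : G.Subgraph, M.Adj x y ↔ (M.deleteVerts S).Adj x y := fun M =>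
    ⟨fun h => deleteVerts_adj.mpr ⟨M.edge_vert h, hx, M.edge_vert h.symm, hy, h⟩,
      fun h => (deleteVerts_adj.mp h).2.2.2.2⟩
  rw [key M₁, key M₂, hdel]

end Subgraph

def matchingsOn (G : SimpleGraph V) (U : Set V) : Set G.Subgraph :=
  {M | M.IsMatching ∧ M.verts = U}

lemma exists_adj_of_mem_matchingsOn {U : Set V} {M : G.Subgraph} (hM : M ∈ G.matchingsOn U)
    {x : V} (hx : x ∈ U) : ∃ y ∈ G.neighborSet x ∩ U, M.Adj x y := by
  obtain ⟨y, hxy, -⟩ := hM.1 (hM.2 ▸ hx)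
  exact ⟨y, ⟨hxy.adj_sub, hM.2 ▸ M.edge_vert hxy.symm⟩, hxy⟩

lemma matchingsOn_subsingleton {U : Set V} (hU : ∀ x ∈ U, ∀ y ∈ U, ¬ G.Adj x y) :
    (G.matchingsOn U).Subsingleton := by
  rintro M₁ hM₁ M₂ hM₂
  have hnoadj : ∀ M ∈ G.matchingsOn U, ∀ x y, ¬ M.Adj x y := fun M hM x y hxy =>
    hU x (hM.2 ▸ M.edge_vert hxy) y (hM.2 ▸ M.edge_vert hxy.symm) hxy.adj_sub
  exact Subgraph.ext (hM₁.2.trans hM₂.2.symm)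
    (funext₂ fun x y => propext (iff_of_false (hnoadj M₁ hM₁ x y) (hnoadj M₂ hM₂ x y)))

lemma ncard_matchingsOn_adj_le [Finite V] (U : Set V) (x y : V) :
    {M ∈ G.matchingsOn U | M.Adj x y}.ncard ≤ (G.matchingsOn (U \ {x, y})).ncard := by
  refine Set.ncard_le_ncard_of_injOn (fun M => M.deleteVerts {x, y}) ?_ ?_
  · rintro M ⟨⟨hM, hMU⟩, hxy⟩
    exact ⟨hM.deleteVerts_pair hxy, by rw [Subgraph.deleteVerts_verts, hMU]⟩
  · rintro M₁ ⟨⟨hM₁, hM₁U⟩, hxy₁⟩ M₂ ⟨⟨hM₂, hM₂U⟩, hxy₂⟩ hdel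
    refine Subgraph.ext_of_deleteVerts_eq (hM₁U.trans hM₂U.symm) ?_ hdel
    rintro z (rfl | rfl) w
    · rw [hM₁.adj_left_iff hxy₁, hM₂.adj_left_iff hxy₂]
    · rw [hM₁.adj_left_iff hxy₁.symm, hM₂.adj_left_iff hxy₂.symm]

lemma ncard_matchingsOn_le_of_neighborSet_inter_subset [Finite V] {U : Set V} {x y : V}
    (hx : x ∈ U) (hxy : G.neighborSet x ∩ U ⊆ {y}) :
    (G.matchingsOn U).ncard ≤ (G.matchingsOn (U \ {x, y})).ncard := by
  have hforced : G.matchingsOn U ⊆ {M ∈ G.matchingsOn U | M.Adj x y} := fun M hM => by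
    obtain ⟨z, hz, hxz⟩ := exists_adj_of_mem_matchingsOn hM hx
    exact ⟨hM, hxy hz ▸ hxz⟩
  exact (Set.ncard_le_ncard hforced).trans (ncard_matchingsOn_adj_le U x y)

section Bipartite

variable [Finite V] {A : Set V}

lemma ncard_matchingsOn_adj_eq_zero_or_le (hbip : ∀ v w, G.Adj v w → (v ∈ A ↔ w ∉ A))
    (hdeg : ∀ v, (G.neighborSet v).ncard ≤ 2) {U : Set V} {a b b' : V} (haU : a ∈ U) (haA : a ∈ A)
    (hb : b ∈ G.neighborSet a ∩ U) (hb' : b' ∈ G.neighborSet a ∩ U) (hbb' : b ≠ b') :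
    {M ∈ G.matchingsOn U | M.Adj a b}.ncard = 0 ∨
      ∃ U', (U' ∩ A).ncard + 2 ≤ (U ∩ A).ncard ∧
        {M ∈ G.matchingsOn U | M.Adj a b}.ncard ≤ (G.matchingsOn U').ncard := by
  set U₁ := U \ {a, b}
  have hb'U₁ : b' ∈ U₁ := ⟨hb'.2, by
    rintro (rfl | rfl)
    exacts [G.irrefl hb'.1, hbb' rfl]⟩
  have hle := ncard_matchingsOn_adj_le (G := G) U a b
  rcases (G.neighborSet b' ∩ U₁).eq_empty_or_nonempty with hempty | ⟨a₂, ha₂⟩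
  · left
    have : G.matchingsOn U₁ = ∅ := Set.eq_empty_of_forall_notMem fun M hM => by
      obtain ⟨z, hz, -⟩ := exists_adj_of_mem_matchingsOn hM hb'U₁
      exact hempty.subset hz
    rw [this, Set.ncard_empty] at hle
    omega
  right
  have ha₂A : a₂ ∈ A := by
    have := hbip a b' hb'.1
    have := hbip b' a₂ ha₂.1
    tauto
  have hunique : G.neighborSet b' ∩ U₁ ⊆ {a₂} := by
    have hcard : (G.neighborSet b' \ {a}).ncard ≤ 1 := by
      have := Set.ncard_sdiff_singleton_add_one (show a ∈ G.neighborSet b' from hb'.1.symm)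
      have := hdeg b'
      omega
    exact fun z hz => (Set.ncard_le_one_iff (Set.toFinite _)).mp hcard
      ⟨hz.1, fun h => hz.2.2 (Or.inl h)⟩ ⟨ha₂.1, fun h => ha₂.2.2 (Or.inl h)⟩
  refine ⟨U₁ \ {b', a₂}, ?_,
    hle.trans (ncard_matchingsOn_le_of_neighborSet_inter_subset hb'U₁ hunique)⟩
  have haa₂ : a ≠ a₂ := fun h => ha₂.2.2 (Or.inl h.symm)
  have hsub : (U₁ \ {b', a₂}) ∩ A ⊆ (U ∩ A) \ {a, a₂} := by
    intro x
    simp only [U₁, Set.mem_inter_iff, Set.mem_sdiff, Set.mem_insert_iff, Set.mem_singleton_iff]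
    tauto
  have hpair : {a, a₂} ⊆ U ∩ A := by
    rintro x (rfl | rfl)
    exacts [⟨haU, haA⟩, ⟨ha₂.2.1, ha₂A⟩]
  have := Set.ncard_sdiff_add_ncard_of_subset hpair
  rw [Set.ncard_pair haa₂] at this
  have := Set.ncard_le_ncard hsub
  omega

lemma ncard_matchingsOn_le_one (hbip : ∀ v w, G.Adj v w → (v ∈ A ↔ w ∉ A)) {U : Set V}
    (hU : U ∩ A = ∅) : (G.matchingsOn U).ncard ≤ 1 := by
  refine Set.ncard_le_one_iff_subsingleton.mpr (matchingsOn_subsingleton fun x hx y hy hxy => ?_)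
  have := hbip x y hxy
  by_cases hxA : x ∈ A
  exacts [hU.subset ⟨hx, hxA⟩, hU.subset ⟨hy, by tauto⟩]

theorem ncard_matchingsOn_le (hbip : ∀ v w, G.Adj v w → (v ∈ A ↔ w ∉ A))
    (hdeg : ∀ v, (G.neighborSet v).ncard ≤ 2) (U : Set V) :
    (G.matchingsOn U).ncard ≤ 2 ^ ((U ∩ A).ncard / 2) := by
  induction hk : (U ∩ A).ncard using Nat.strong_induction_on generalizing U with
  | _ k ih =>
  rcases Nat.eq_zero_or_pos k with rfl | hpos
  · exact ncard_matchingsOn_le_one hbip ((Set.ncard_eq_zero (Set.toFinite _)).mp hk)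
  obtain ⟨a, haU, haA⟩ := Set.nonempty_of_ncard_ne_zero (hk ▸ hpos.ne')
  set s := G.neighborSet a ∩ U
  have hcard : s.ncard ≤ 2 := (Set.ncard_le_ncard Set.inter_subset_left).trans (hdeg a)
  rcases hcard.lt_or_eq with hone | htwo
  · have : Nonempty V := ⟨a⟩
    obtain ⟨b, hb⟩ := (Set.ncard_le_one_iff_subset_singleton (Set.toFinite _)).mp
      (Nat.lt_succ_iff.mp hone)
    have hlt : ((U \ {a, b}) ∩ A).ncard < k := hk ▸ Set.ncard_lt_ncard
      ⟨fun x hx => ⟨hx.1.1, hx.2⟩, fun h => (h ⟨haU, haA⟩).1.2 (Or.inl rfl)⟩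
    calc (G.matchingsOn U).ncard ≤ (G.matchingsOn (U \ {a, b})).ncard :=
          ncard_matchingsOn_le_of_neighborSet_inter_subset haU hb
      _ ≤ 2 ^ (((U \ {a, b}) ∩ A).ncard / 2) := ih _ hlt _ rfl
      _ ≤ 2 ^ (k / 2) := Nat.pow_le_pow_right two_pos (Nat.div_le_div_right hlt.le)
  obtain ⟨b₁, b₂, hne, hs⟩ := Set.ncard_eq_two.mp htwo
  have hbranch : ∀ b ∈ s, ∀ b' ∈ s, b ≠ b' →
      2 * {M ∈ G.matchingsOn U | M.Adj a b}.ncard ≤ 2 ^ (k / 2) := by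
    intro b hb b' hb' hbb'
    rcases ncard_matchingsOn_adj_eq_zero_or_le hbip hdeg haU haA hb hb' hbb' with
      h | ⟨U', hU', h⟩
    · simp [h]
    calc 2 * {M ∈ G.matchingsOn U | M.Adj a b}.ncard ≤ 2 * 2 ^ ((U' ∩ A).ncard / 2) :=
          Nat.mul_le_mul_left 2 (h.trans (ih _ (by omega) U' rfl))
      _ = 2 ^ ((U' ∩ A).ncard / 2 + 1) := by ring
      _ ≤ 2 ^ (k / 2) := Nat.pow_le_pow_right two_pos (by omega)
  have hsplit : G.matchingsOn U ⊆
      {M ∈ G.matchingsOn U | M.Adj a b₁} ∪ {M ∈ G.matchingsOn U | M.Adj a b₂} := by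
    intro M hM
    obtain ⟨y, hy, hay⟩ := exists_adj_of_mem_matchingsOn hM haU
    obtain rfl | rfl : y ∈ ({b₁, b₂} : Set V) := hs ▸ hy
    exacts [Or.inl ⟨hM, hay⟩, Or.inr ⟨hM, hay⟩]
  have hb₁ : b₁ ∈ s := hs ▸ Or.inl rfl
  have hb₂ : b₂ ∈ s := hs ▸ Or.inr rfl
  have := (Set.ncard_le_ncard hsplit).trans (Set.ncard_union_le _ _)
  have := hbranch b₁ hb₁ b₂ hb₂ hne
  have := hbranch b₂ hb₂ b₁ hb₁ hne.symm
  omega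

theorem card_isPerfectMatching_le (hbip : ∀ v w, G.Adj v w → (v ∈ A ↔ w ∉ A))
    (hdeg : ∀ v, (G.neighborSet v).ncard ≤ 2) :
    Nat.card {M : G.Subgraph // M.IsPerfectMatching} ≤ 2 ^ (A.ncard / 2) := by
  have h : {M : G.Subgraph | M.IsPerfectMatching} = G.matchingsOn Set.univ := by
    ext M
    exact and_congr_right fun _ => Subgraph.isSpanning_iff
  calc Nat.card {M : G.Subgraph // M.IsPerfectMatching}
      = (G.matchingsOn Set.univ).ncard := h ▸ Nat.card_coe_set_eq _
    _ ≤ 2 ^ (A.ncard / 2) := by simpa using ncard_matchingsOn_le hbip hdeg Set.univ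

end Bipartite

/-- Vertex `(s, i, t)` is vertex `t` on side `s` of the `i`-th copy of `K₂,₂`. -/
def fourCycles (m : ℕ) : SimpleGraph (Bool × Fin m × Bool) where
  Adj p q := p.1 ≠ q.1 ∧ p.2.1 = q.2.1
  symm := ⟨fun _ _ h => ⟨h.1.symm, h.2.symm⟩⟩
  loopless := ⟨fun _ h => h.1 rfl⟩

variable {m : ℕ}

def fourCyclesMatching (f : Fin m → Bool) : (fourCycles m).Subgraph where
  verts := Set.univ
  Adj p q := p.1 ≠ q.1 ∧ p.2.1 = q.2.1 ∧ (p.2.2 ^^ q.2.2) = f p.2.1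
  adj_sub h := ⟨h.1, h.2.1⟩
  edge_vert _ := trivial
  symm := ⟨fun _ _ h => ⟨h.1.symm, h.2.1.symm, by rw [Bool.xor_comm, ← h.2.1, h.2.2]⟩⟩

lemma fourCyclesMatching_isPerfectMatching (f : Fin m → Bool) :
    (fourCyclesMatching f).IsPerfectMatching := by
  refine Subgraph.isPerfectMatching_iff.mpr fun ⟨s, i, t⟩ => ⟨(!s, i, t ^^ f i), ?_, ?_⟩
  · simp [fourCyclesMatching]
  · rintro ⟨s', j, t'⟩ ⟨hs, hij, ht⟩
    obtain rfl : i = j := hij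
    simp only at hs ht ⊢
    generalize f i = c at ht ⊢
    cases s <;> cases s' <;> cases t <;> cases t' <;> cases c <;> simp_all

lemma fourCyclesMatching_injective :
    Function.Injective (fourCyclesMatching : (Fin m → Bool) → (fourCycles m).Subgraph) := by
  intro f g h
  funext i
  have := congrArg (fun M : (fourCycles m).Subgraph => M.Adj (false, i, false) (true, i, true)) h
  simpa [fourCyclesMatching] using this

lemma fourCycles_bipartite (v w : Bool × Fin m × Bool) (h : (fourCycles m).Adj v w) :
    (v ∈ {p | p.1 = false} ↔ w ∉ {p | p.1 = false}) := by
  obtain ⟨hs, -⟩ := h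
  simp only [Set.mem_ofPred_eq]
  cases hv : v.1 <;> cases hw : w.1 <;> simp_all

lemma ncard_neighborSet_fourCycles_le (v : Bool × Fin m × Bool) :
    ((fourCycles m).neighborSet v).ncard ≤ 2 := by
  obtain ⟨s, i, t⟩ := v
  have hsub : (fourCycles m).neighborSet (s, i, t) ⊆ {(!s, i, false), (!s, i, true)} := by
    rintro ⟨s', j, t'⟩ ⟨hs, rfl⟩
    cases s <;> cases s' <;> cases t' <;> simp_all
  exact (Set.ncard_le_ncard hsub).trans ((Set.ncard_insert_le _ _).trans (by simp))

lemma ncard_setOf_fst_eq (s : Bool) : {p : Bool × Fin m × Bool | p.1 = s}.ncard = m + m := by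
  have : {p : Bool × Fin m × Bool | p.1 = s} = {s} ×ˢ Set.univ := by ext; simp
  rw [this, Set.ncard_prod]
  simp [Set.ncard_univ]
  omega

theorem card_isPerfectMatching_fourCycles :
    Nat.card {M : (fourCycles m).Subgraph // M.IsPerfectMatching} = 2 ^ m := by
  refine le_antisymm ?_ ?_
  · have := card_isPerfectMatching_le (fourCycles_bipartite (m := m))
      ncard_neighborSet_fourCycles_le
    rwa [ncard_setOf_fst_eq, show (m + m) / 2 = m by omega] at this
  calc 2 ^ m = Nat.card (Fin m → Bool) := by simp
    _ ≤ Nat.card {M : (fourCycles m).Subgraph // M.IsPerfectMatching} :=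
      Nat.card_le_card_of_injective
        (fun f => ⟨fourCyclesMatching f, fourCyclesMatching_isPerfectMatching f⟩)
        fun _ _ h => fourCyclesMatching_injective (congrArg Subtype.val h)

end SimpleGraph

/-- The number of perfect matchings of a bipartite graph with parts of size `n` and maximum
degree at most 2 is at most `2 ^ ⌊n/2⌋`, and this bound is attained for every even `n`. -/
theorem stmt_7 :
    (∀ (V : Type) (_ : Fintype V) (G : SimpleGraph V) (A : Set V) (n : ℕ),
      (∀ v w, G.Adj v w → (v ∈ A ↔ w ∉ A)) → A.ncard = n → (Aᶜ : Set V).ncard = n →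
      (∀ v, (G.neighborSet v).ncard ≤ 2) →
      Nat.card {M : G.Subgraph // M.IsPerfectMatching} ≤ 2 ^ (n / 2)) ∧
    (∀ n : ℕ, Even n →
      ∃ (V : Type) (_ : Fintype V) (G : SimpleGraph V) (A : Set V),
        (∀ v w, G.Adj v w → (v ∈ A ↔ w ∉ A)) ∧ A.ncard = n ∧ (Aᶜ : Set V).ncard = n ∧
        (∀ v, (G.neighborSet v).ncard ≤ 2) ∧
        Nat.card {M : G.Subgraph // M.IsPerfectMatching} = 2 ^ (n / 2)) := by
  refine ⟨fun V _ G A n hbip hA _ hdeg => hA ▸ G.card_isPerfectMatching_le hbip hdeg, ?_⟩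
  rintro n ⟨m, rfl⟩
  have hcompl : ({p | p.1 = false}ᶜ : Set (Bool × Fin m × Bool)) = {p | p.1 = true} := by
    ext
    simp
  refine ⟨Bool × Fin m × Bool, inferInstance, SimpleGraph.fourCycles m, {p | p.1 = false},
    SimpleGraph.fourCycles_bipartite, SimpleGraph.ncard_setOf_fst_eq false,
    hcompl ▸ SimpleGraph.ncard_setOf_fst_eq true, SimpleGraph.ncard_neighborSet_fourCycles_le, ?_⟩
  rw [SimpleGraph.card_isPerfectMatching_fourCycles, show (m + m) / 2 = m by omega]
end

section
/- The expected number of cycles of a uniformly random permutation of {1, …, n} equals the n-th harmonic number H_n = ∑_{i=1}^{n} 1/i. -/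
/-!
Write `σ : Perm (Fin (n + 1))` as `swap 0 p * σ₀`, where `σ₀` fixes `0` and acts as an
arbitrary `e : Perm (Fin n)` on the rest (`Equiv.Perm.decomposeFin`). If `p = 0`, `σ` has the
cycles of `e` plus the fixed point `0`; otherwise multiplying by `swap 0 p` merges that fixed
point into the cycle of `p`, so `σ` has as many cycles as `e`. Summing, the total number of
cycles `S n` over `Perm (Fin n)` satisfies `S (n + 1) = (n + 1) S n + n!`, i.e. `S n / n!`
gains `1 / (n + 1)`.
-/

open Equiv Equiv.Perm Finset Nat

namespace Equiv.Perm

variable {α : Type*} [Fintype α] [DecidableEq α]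

theorem card_parts_partition (σ : Perm α) :
    Multiset.card σ.partition.parts =
      Multiset.card σ.cycleType + (Fintype.card α - #σ.support) := by
  simp [parts_partition]

theorem card_parts_partition_eq_card_cycleType_add_card_fixed (σ : Perm α) :
    Multiset.card σ.partition.parts =
      Multiset.card σ.cycleType + Fintype.card {x // σ x = x} := by
  rw [card_parts_partition, Fintype.card_subtype, ← card_compl]
  congr 3
  ext x
  simp

theorem Disjoint.card_parts_partition_mul {σ τ : Perm α} (h : Disjoint σ τ) :
    Multiset.card (σ * τ).partition.parts + Fintype.card α =
      Multiset.card σ.partition.parts + Multiset.card τ.partition.parts := by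
  have hsupp : #σ.support + #τ.support ≤ Fintype.card α := by
    rw [← h.card_support_mul]; exact card_le_univ _
  simp only [card_parts_partition, h.cycleType_mul, h.card_support_mul, Multiset.card_add]
  omega

theorem IsCycle.card_parts_partition_swap_mul {c : Perm α} (hc : c.IsCycle) {x : α}
    (hx : c x ≠ x) :
    Multiset.card (swap x (c x) * c).partition.parts = Multiset.card c.partition.parts + 1 := by
  have hcard : #c.support ≤ Fintype.card α := card_le_univ _
  by_cases hcc : c (c x) = x
  · have hswap : c = swap x (c x) := hc.eq_swap_of_apply_apply_eq_self hx hcc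
    have hsupp : #c.support = 2 := by rw [hswap, card_support_swap hx.symm]
    set y := c x
    rw [hswap, swap_mul_self, card_parts_partition, card_parts_partition, cycleType_one,
      support_one, card_empty, ← hswap, hc.cycleType, hsupp]
    simp only [Multiset.card_zero, Multiset.card_singleton]
    omega
  · have hxc : x ∈ c.support := mem_support.mpr hx
    have htwo := hc.two_le_card_support
    simp only [card_parts_partition, (hc.swap_mul hx hcc).cycleType, hc.cycleType,
      support_swap_mul_eq c x hcc, card_sdiff_of_subset (singleton_subset_iff.mpr hxc)]
    simp only [Multiset.card_singleton, card_singleton]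
    omega

theorem card_parts_partition_swap_mul {g : Perm α} {x : α} (hx : g x ≠ x) :
    Multiset.card (swap x (g x) * g).partition.parts = Multiset.card g.partition.parts + 1 := by
  set c := g.cycleOf x
  have hcg : c ∈ g.cycleFactorsFinset :=
    cycleOf_mem_cycleFactorsFinset_iff.mpr (mem_support.mpr hx)
  have hcx : c x = g x := g.cycleOf_apply_self x
  have hc : c.IsCycle := isCycle_cycleOf g hx
  set d := g * c⁻¹
  have hdc : Disjoint d c := disjoint_mul_inv_of_mem_cycleFactorsFinset hcg
  have hg : g = d * c := (inv_mul_cancel_right g c).symm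
  have hxc : x ∈ c.support := mem_support.mpr (hcx ▸ hx)
  have hds : Disjoint d (swap x (c x)) := hdc.mono le_rfl <| by
    rw [support_swap (hcx ▸ hx).symm, insert_subset_iff, singleton_subset_iff]
    exact ⟨hxc, apply_mem_support.mpr hxc⟩
  have hsplit : swap x (g x) * g = d * (swap x (c x) * c) := by
    rw [← hcx, hg, ← mul_assoc, ← hds.commute.eq, mul_assoc]
  have key := hdc.card_parts_partition_mul
  have key' := (hds.mul_right hdc).card_parts_partition_mul
  rw [← hg] at key
  rw [← hsplit, hc.card_parts_partition_swap_mul (hcx ▸ hx)] at key'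
  omega

theorem decomposeFin_symm_eq_swap_mul {n : ℕ} (p : Fin (n + 1)) (e : Perm (Fin n)) :
    decomposeFin.symm (p, e) = swap 0 p * decomposeFin.symm (0, e) := by
  ext a
  cases a using Fin.cases <;> simp

theorem decomposeFin_symm_zero {n : ℕ} (e : Perm (Fin n)) :
    decomposeFin.symm (0, e) = e.extendDomain (finSuccAboveEquiv 0) := by
  ext a
  cases a using Fin.cases with
  | zero => simp [extendDomain_apply_not_subtype]
  | succ i =>
    rw [extendDomain_apply_subtype e (finSuccAboveEquiv 0) (Fin.succ_ne_zero i)]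
    have hi : (finSuccAboveEquiv 0).symm ⟨i.succ, i.succ_ne_zero⟩ = i :=
      (finSuccAboveEquiv 0).symm_apply_eq.mpr (Subtype.ext (Fin.zero_succAbove i).symm)
    simp [hi, finSuccAboveEquiv_apply]

theorem card_parts_partition_decomposeFin_symm_zero {n : ℕ} (e : Perm (Fin n)) :
    Multiset.card (decomposeFin.symm (0, e)).partition.parts =
      Multiset.card e.partition.parts + 1 := by
  have hcard : #e.support ≤ n := by simpa using e.support.card_le_univ
  rw [decomposeFin_symm_zero, card_parts_partition, card_parts_partition, cycleType_extendDomain,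
    card_support_extend_domain]
  simp only [Fintype.card_fin]
  omega

theorem card_parts_partition_decomposeFin_symm_succ {n : ℕ} (e : Perm (Fin n)) (i : Fin n) :
    Multiset.card (decomposeFin.symm (i.succ, e)).partition.parts =
      Multiset.card e.partition.parts := by
  have h0 : decomposeFin.symm (i.succ, e) 0 ≠ 0 := by simp
  have key := card_parts_partition_swap_mul h0
  rw [decomposeFin_symm_apply_zero, decomposeFin_symm_eq_swap_mul, swap_mul_self_mul,
    card_parts_partition_decomposeFin_symm_zero] at key
  rw [decomposeFin_symm_eq_swap_mul]
  omega

end Equiv.Perm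

theorem sum_card_parts_partition_fin_succ (n : ℕ) :
    ∑ σ : Perm (Fin (n + 1)), Multiset.card σ.partition.parts =
      (n + 1) * ∑ e : Perm (Fin n), Multiset.card e.partition.parts + n ! := by
  rw [univ_perm_fin_succ, sum_map, Fintype.sum_prod_type, Fin.sum_univ_succ]
  simp only [coe_toEmbedding, card_parts_partition_decomposeFin_symm_zero,
    card_parts_partition_decomposeFin_symm_succ, sum_add_distrib, sum_const, Finset.card_univ,
    Fintype.card_perm, Fintype.card_fin, smul_eq_mul]
  ring

theorem sum_card_parts_partition_fin (n : ℕ) :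
    (∑ σ : Perm (Fin n), Multiset.card σ.partition.parts : ℝ) =
      n ! * ∑ i ∈ range n, 1 / ((i : ℝ) + 1) := by
  induction n with
  | zero => simp [parts_partition]
  | succ n ih =>
    rw [← Nat.cast_sum] at ih ⊢
    rw [sum_card_parts_partition_fin_succ]
    push_cast [ih, sum_range_succ, Nat.factorial_succ]
    field_simp

theorem stmt_8_general (n : ℕ) :
    (∑ s : Equiv.Perm (Fin n),
        ((s.cycleType.card + Fintype.card {x : Fin n // s x = x} : ℕ) : ℝ))
        / (n.factorial : ℝ)
      = ∑ i ∈ Finset.range n, 1 / ((i : ℝ) + 1) := by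
  simp only [← card_parts_partition_eq_card_cycleType_add_card_fixed]
  rw [sum_card_parts_partition_fin, mul_div_cancel_left₀ _ (by positivity)]

/-- The expected number of cycles (including fixed points) of a uniformly random permutation
of `{1,…,n}` equals the harmonic number `H_n = ∑_{i=1}^n 1/i`. -/
theorem stmt_8 (n : ℕ) (hn : 1 ≤ n) :
    (∑ s : Equiv.Perm (Fin n),
        ((s.cycleType.card + Fintype.card {x : Fin n // s x = x} : ℕ) : ℝ))
        / (n.factorial : ℝ)
      = ∑ i ∈ Finset.range n, 1 / ((i : ℝ) + 1) :=
  stmt_8_general n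
end

section
/- The proportion of permutations of {1, …, n} having at most 1.1·ln(n) cycles tends to 1 as n → ∞. -/
/-!
Inserting a new point into a permutation of `n` points either makes it a new fixed point
(one way) or splices it into an existing cycle right before one of the `n` old points, so
`∑_σ x ^ numCycles σ = x (x + 1) ⋯ (x + n - 1)`. For `c > 1`, Markov's inequality applied to
`c ^ numCycles σ` bounds the proportion of permutations with more than `c ln n` cycles by
`c ^ (-c ln n) ∏_{k < n} (c + k) / (k + 1) ≤ e ^ ((c - 1) (1 + ln n)) n ^ (-c ln c)`,
which tends to `0` because `c ln c > c - 1`.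
-/

open Finset

namespace Equiv.Perm

variable {α β : Type*} [DecidableEq α] [DecidableEq β] {a b : α}

theorem disjoint_swap_of_apply_eq_self {f : Perm α} (ha : f a = a) (hb : f b = b) :
    Disjoint f (swap b a) := by
  intro x
  by_cases hxa : x = a
  · exact .inl (hxa ▸ ha)
  by_cases hxb : x = b
  · exact .inl (hxb ▸ hb)
  exact .inr (swap_apply_of_ne_of_ne hxb hxa)

variable [Fintype α] [Fintype β]

def numCycles (σ : Perm α) : ℕ := σ.partition.parts.card

theorem numCycles_add_sum_cycleType (σ : Perm α) :
    σ.numCycles + σ.cycleType.sum = Multiset.card σ.cycleType + Fintype.card α := by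
  have := σ.support.card_le_univ
  rw [sum_cycleType]
  simp only [numCycles, parts_partition, Multiset.card_add, Multiset.card_replicate]
  omega

theorem numCycles_eq_card_cycleType_add_card_fixed (σ : Perm α) :
    σ.numCycles = Multiset.card σ.cycleType + Fintype.card {x // σ x = x} := by
  have hfixed : Fintype.card {x // σ x = x} = Fintype.card α - σ.cycleType.sum :=
    (Fintype.card_congr (Equiv.refl _)).trans σ.card_fixedPoints
  have hsum : σ.cycleType.sum ≤ Fintype.card α := σ.sum_cycleType ▸ σ.support.card_le_univ
  have := σ.numCycles_add_sum_cycleType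
  omega

theorem IsCycle.numCycles_add_card_support {σ : Perm α} (hσ : σ.IsCycle) :
    σ.numCycles + #σ.support = Fintype.card α + 1 := by
  have := σ.numCycles_add_sum_cycleType
  rw [hσ.cycleType] at this
  simp only [Multiset.sum_singleton, Multiset.card_singleton] at this
  omega

theorem Disjoint.numCycles_mul {σ τ : Perm α} (h : Disjoint σ τ) :
    (σ * τ).numCycles + Fintype.card α = σ.numCycles + τ.numCycles := by
  have hσ := σ.numCycles_add_sum_cycleType
  have hτ := τ.numCycles_add_sum_cycleType
  have hστ := (σ * τ).numCycles_add_sum_cycleType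
  rw [h.cycleType_mul, Multiset.sum_add, Multiset.card_add] at hστ
  omega

theorem cycleType_permCongr (e : α ≃ β) (σ : Perm α) :
    (e.permCongr σ).cycleType = σ.cycleType := by
  have : e.permCongr σ =
      σ.extendDomain (e.trans (Equiv.subtypeUnivEquiv fun _ ↦ trivial).symm) := by
    ext b
    rw [extendDomain_apply_subtype _ _ trivial]
    simp [Equiv.subtypeUnivEquiv]
  rw [this, cycleType_extendDomain]

theorem numCycles_permCongr (e : α ≃ β) (σ : Perm α) :
    (e.permCongr σ).numCycles = σ.numCycles := by
  have hα := σ.numCycles_add_sum_cycleType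
  have hβ := (e.permCongr σ).numCycles_add_sum_cycleType
  rw [cycleType_permCongr, ← Fintype.card_congr e] at hβ
  omega

theorem cycleType_optionCongr (σ : Perm α) : cycleType σ.optionCongr = σ.cycleType := by
  have : σ.optionCongr = σ.extendDomain (Equiv.optionIsSomeEquiv α).symm := by
    refine Equiv.ext fun x ↦ ?_
    cases x with
    | none => exact (extendDomain_apply_not_subtype _ _ (by simp)).symm
    | some a => simp [extendDomain_apply_subtype, Equiv.optionIsSomeEquiv]
  rw [this, cycleType_extendDomain]

theorem numCycles_optionCongr (σ : Perm α) : numCycles σ.optionCongr = σ.numCycles + 1 := by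
  have h := σ.numCycles_add_sum_cycleType
  have h' := numCycles_add_sum_cycleType σ.optionCongr
  rw [cycleType_optionCongr, Fintype.card_option] at h'
  omega

theorem IsCycle.swap_mul_of_notMem {c : Perm α} (hc : c.IsCycle) (ha : a ∈ c.support)
    (hb : b ∉ c.support) :
    (swap b a * c).IsCycle ∧ #(swap b a * c).support = #c.support + 1 := by
  set l := c.toList a
  have hlc : l.formPerm = c := by rw [formPerm_toList, hc.cycleOf_eq (mem_support.1 ha)]
  have hl : l.Nodup := nodup_toList c a
  have hlen : 2 ≤ l.length := two_le_length_toList_iff_mem_support.2 ha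
  have hsupp : c.support = l.toFinset := by
    rw [← hlc, List.support_formPerm_of_nodup l hl (toList_ne_singleton c a)]
  obtain ⟨l', hl'⟩ : ∃ l', l = a :: l' := by
    obtain ⟨y, l', hl'⟩ := List.exists_cons_of_length_pos (by omega : 0 < l.length)
    have := toList_getElem_zero c a ha
    simp only [l, hl', List.getElem_cons_zero] at this
    exact ⟨l', this ▸ hl'⟩
  have hbl : (b :: l).Nodup := List.nodup_cons.2 ⟨by simpa [hsupp] using hb, hl⟩
  have hform : (b :: l).formPerm = swap b a * c := by
    rw [hl', List.formPerm_cons_cons, ← hl', hlc]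
  rw [← hform]
  refine ⟨List.isCycle_formPerm hbl (by simp; omega), ?_⟩
  rw [List.support_formPerm_of_nodup _ hbl (by simp [hl']), hsupp,
    List.toFinset_card_of_nodup hl, List.toFinset_card_of_nodup hbl, List.length_cons]

theorem numCycles_swap_mul_of_apply_eq_self {f : Perm α} (hb : f b = b) (hab : a ≠ b) :
    (swap b a * f).numCycles + 1 = f.numCycles := by
  have hswap : (swap b a).numCycles + #(swap b a).support = Fintype.card α + 1 :=
    (isCycle_swap hab.symm).numCycles_add_card_support
  rw [card_support_swap hab.symm] at hswap
  by_cases ha : f a = a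
  · have := (disjoint_swap_of_apply_eq_self ha hb).symm.numCycles_mul
    omega
  -- otherwise `b` is spliced into the cycle `c` of `f` through `a`
  set c := f.cycleOf a
  set g := f * c⁻¹
  have hc : c.IsCycle := isCycle_cycleOf f ha
  have hac : a ∈ c.support := mem_support_cycleOf_iff.2 ⟨.refl _ _, mem_support.2 ha⟩
  have hbc : b ∉ c.support := fun h ↦ mem_support.1 (support_cycleOf_le f a h) hb
  have hgc : Disjoint g c := disjoint_mul_inv_of_mem_cycleFactorsFinset
    (cycleOf_mem_cycleFactorsFinset_iff.2 (mem_support.2 ha))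
  have hga : g a = a := (hgc a).resolve_right (mem_support.1 hac)
  have hgb : g b = b := by
    rw [mul_apply, inv_eq_iff_eq.2 (notMem_support.1 hbc).symm, hb]
  have hgs : Disjoint g (swap b a) := disjoint_swap_of_apply_eq_self hga hgb
  have hf : f = g * c := by simp [g]
  have hsf : swap b a * f = g * (swap b a * c) := by
    rw [hf, ← mul_assoc, ← hgs.commute.eq, mul_assoc]
  obtain ⟨hsc, hsc_card⟩ := hc.swap_mul_of_notMem hac hbc
  have h₁ := hsf ▸ (hgs.mul_right hgc).numCycles_mul
  have h₂ := hf ▸ hgc.numCycles_mul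
  have h₃ := hc.numCycles_add_card_support
  have h₄ := hsc.numCycles_add_card_support
  omega

theorem numCycles_decomposeOption_symm_none (σ : Perm α) :
    (decomposeOption.symm (none, σ)).numCycles = σ.numCycles + 1 := by
  simp [pull_end, numCycles_optionCongr]

theorem numCycles_decomposeOption_symm_some (a : α) (σ : Perm α) :
    (decomposeOption.symm (some a, σ)).numCycles = σ.numCycles := by
  have := numCycles_swap_mul_of_apply_eq_self (f := σ.optionCongr) rfl (Option.some_ne_none a)
  rw [numCycles_optionCongr] at this
  simpa [decomposeOption_symm_apply] using this

theorem sum_pow_numCycles {R : Type*} [CommSemiring R] (x : R) :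
    ∑ σ : Perm α, x ^ σ.numCycles = ∏ k ∈ range (Fintype.card α), (x + k) := by
  revert ‹DecidableEq α›
  refine Fintype.induction_empty_option (P := fun γ _ ↦ ∀ [DecidableEq γ],
    ∑ σ : Perm γ, x ^ σ.numCycles = ∏ k ∈ range (Fintype.card γ), (x + k)) ?_ ?_ ?_ α
  · intro γ δ _ e ih _
    let := Fintype.ofEquiv δ e.symm
    classical
    rw [← Fintype.card_congr e, ← ih, ← (permCongr e).sum_comp]
    simp only [numCycles_permCongr]
  · intro _
    simp [numCycles, parts_partition]
  · intro γ _ ih inst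
    classical
    obtain rfl : inst = fun a b ↦ Option.instDecidableEq a b := Subsingleton.elim _ _
    rw [← decomposeOption.symm.sum_comp, Fintype.sum_prod_type, Fintype.sum_option]
    simp only [numCycles_decomposeOption_symm_none, numCycles_decomposeOption_symm_some, pow_succ,
      ← Finset.sum_mul, sum_const, card_univ, ih, Fintype.card_option, prod_range_succ]
    ring

end Equiv.Perm

open Equiv Equiv.Perm Real Filter Topology
open scoped Nat

theorem prod_add_natCast_le_factorial_mul_exp {x : ℝ} (hx : 1 ≤ x) (n : ℕ) :
    ∏ k ∈ range n, (x + k) ≤ n ! * exp ((x - 1) * (1 + log n)) := by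
  have hfac : (n ! : ℝ) = ∏ k ∈ range n, ((k : ℝ) + 1) := by
    rw [← Finset.prod_range_add_one_eq_factorial]
    push_cast
    rfl
  have hterm : ∀ k ∈ range n, x + k ≤ (k + 1) * exp ((x - 1) / (k + 1)) := fun k _ ↦
    calc x + k = (k + 1) * ((x - 1) / (k + 1) + 1) := by field_simp; ring
      _ ≤ (k + 1) * exp ((x - 1) / (k + 1)) := by gcongr; exact add_one_le_exp _
  have hharmonic : ∑ k ∈ range n, (x - 1) / (k + 1) ≤ (x - 1) * (1 + log n) := by
    have := harmonic_le_one_add_log n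
    push_cast [harmonic] at this
    simp only [div_eq_mul_inv, ← mul_sum]
    gcongr
  calc ∏ k ∈ range n, (x + k)
      ≤ ∏ k ∈ range n, ((k + 1) * exp ((x - 1) / (k + 1))) :=
        prod_le_prod (fun k _ ↦ by positivity) hterm
    _ = n ! * exp (∑ k ∈ range n, (x - 1) / (k + 1)) := by rw [prod_mul_distrib, hfac, exp_sum]
    _ ≤ n ! * exp ((x - 1) * (1 + log n)) := by gcongr

theorem card_lt_numCycles_mul_rpow_le {α : Type*} [DecidableEq α] [Fintype α] {x : ℝ}
    (hx : 1 ≤ x) (t : ℝ) :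
    (#{σ : Perm α | t < σ.numCycles} : ℝ) * x ^ t ≤ ∏ k ∈ range (Fintype.card α), (x + k) := by
  rw [← sum_pow_numCycles]
  calc (#{σ : Perm α | t < σ.numCycles} : ℝ) * x ^ t
      = ∑ σ : Perm α with t < σ.numCycles, x ^ t := by rw [sum_const, nsmul_eq_mul]
    _ ≤ ∑ σ : Perm α with t < σ.numCycles, x ^ (σ.numCycles : ℝ) :=
        sum_le_sum fun σ hσ ↦ rpow_le_rpow_of_exponent_le hx (mem_filter.1 hσ).2.le
    _ ≤ ∑ σ : Perm α, x ^ σ.numCycles := by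
        simp only [rpow_natCast]
        exact sum_le_sum_of_subset_of_nonneg (subset_univ _) fun _ _ _ ↦ by positivity

theorem card_lt_numCycles_div_factorial_le {c : ℝ} (hc : 1 ≤ c) (n : ℕ) :
    (#{σ : Perm (Fin n) | c * log n < σ.numCycles} : ℝ) / n !
      ≤ exp ((c - 1) - (c * log c - (c - 1)) * log n) := by
  set bad := (#{σ : Perm (Fin n) | c * log n < σ.numCycles} : ℝ)
  have key : bad * exp (log c * (c * log n)) ≤ n ! * exp ((c - 1) * (1 + log n)) := by
    rw [← rpow_def_of_pos (by linarith)]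
    have := card_lt_numCycles_mul_rpow_le (α := Fin n) hc (c * log n)
    rw [Fintype.card_fin] at this
    exact this.trans (prod_add_natCast_le_factorial_mul_exp hc n)
  rw [div_le_iff₀ (by positivity)]
  calc bad = bad * exp (log c * (c * log n)) * exp (-(log c * (c * log n))) := by
        rw [mul_assoc, ← exp_add, add_neg_cancel, exp_zero, mul_one]
    _ ≤ n ! * exp ((c - 1) * (1 + log n)) * exp (-(log c * (c * log n))) := by gcongr
    _ = exp ((c - 1) - (c * log c - (c - 1)) * log n) * n ! := by
        rw [mul_assoc, ← exp_add, mul_comm]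
        congr 2
        ring

theorem tendsto_card_numCycles_le_div_factorial {c : ℝ} (hc : 1 < c) :
    Tendsto (fun n : ℕ ↦ (#{σ : Perm (Fin n) | σ.numCycles ≤ c * log n} : ℝ) / n !)
      atTop (𝓝 1) := by
  have hκ : 0 < c * log c - (c - 1) := sub_pos.2 (self_sub_one_lt_mul_log (by linarith) hc.ne')
  have hbound : Tendsto (fun n : ℕ ↦ exp ((c - 1) - (c * log c - (c - 1)) * log n)) atTop (𝓝 0) :=
    tendsto_exp_atBot.comp <| tendsto_atBot_add_const_left _ _ <| tendsto_neg_atTop_atBot.comp <|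
      (tendsto_log_atTop.comp tendsto_natCast_atTop_atTop).const_mul_atTop hκ
  have hbad := squeeze_zero (fun n ↦ by positivity) (card_lt_numCycles_div_factorial_le hc.le)
    hbound
  have hsplit : ∀ n : ℕ, (#{σ : Perm (Fin n) | σ.numCycles ≤ c * log n} : ℝ) / n !
      = 1 - (#{σ : Perm (Fin n) | c * log n < σ.numCycles} : ℝ) / n ! := by
    intro n
    have := card_filter_add_card_filter_not (s := (univ : Finset (Perm (Fin n))))
      (p := fun σ ↦ (σ.numCycles : ℝ) ≤ c * log n)
    simp only [not_le, Finset.card_univ, Fintype.card_perm, Fintype.card_fin] at this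
    rw [eq_sub_iff_add_eq, ← add_div, ← Nat.cast_add, this, div_self (by positivity)]
  simpa [hsplit] using hbad.const_sub 1

/-- The proportion of permutations of `{1,…,n}` having at most `1.1 · ln n` cycles tends to 1
as `n → ∞`. -/
theorem stmt_10 :
    Filter.Tendsto (fun n : ℕ =>
      (Nat.card {s : Equiv.Perm (Fin n) //
          ((s.cycleType.card + Fintype.card {x : Fin n // s x = x} : ℕ) : ℝ)
            ≤ 1.1 * Real.log n} : ℝ) / (n.factorial : ℝ))
      Filter.atTop (nhds 1) := by
  have hcard (n : ℕ) : Nat.card {s : Equiv.Perm (Fin n) //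
      ((s.cycleType.card + Fintype.card {x : Fin n // s x = x} : ℕ) : ℝ) ≤ 1.1 * Real.log n}
      = #{σ : Perm (Fin n) | σ.numCycles ≤ 1.1 * log n} := by
    simp only [Nat.card_eq_fintype_card, Fintype.card_subtype,
      numCycles_eq_card_cycleType_add_card_fixed]
  simpa only [hcard] using tendsto_card_numCycles_le_div_factorial (by norm_num : (1 : ℝ) < 1.1)
end

section
/- Let G be a bipartite graph with parts of equal size and maximum degree at most 2 that admits a perfect matching, and suppose its non-special matchable edges form q disjoint even cycles C_1,…,C_q, each C_j having exactly two perfect matchings w^{0,j} and w^{1,j}. Then the map δ ↦ (set of special edges) ∪ ⋃_j w^{δ_j, j} is a bijection from {0,1}^q onto the set of perfect matchings of G. -/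
/-- `G` bipartite with equal parts, max degree ≤ 2, admitting a perfect matching.
`S` is the subgraph of special edges (edges lying in every perfect matching), and the
non-special matchable edges decompose into `q` pairwise disjoint even cycles `C j`, each
having exactly two perfect matchings `w j false` and `w j true`.  Then
`δ ↦ S ⊔ ⋃_j w j (δ j)` is a bijection from `{0,1}^q` onto the perfect matchings of `G`. -/
theorem stmt_15 {V : Type*} [Fintype V] (G : SimpleGraph V) (A : Set V)
    (hbip : ∀ v w, G.Adj v w → (v ∈ A ↔ w ∉ A))
    (hcard : A.ncard = (Aᶜ : Set V).ncard)
    (hdeg : ∀ v, (G.neighborSet v).ncard ≤ 2)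
    (hpm : ∃ M : G.Subgraph, M.IsPerfectMatching)
    (S : G.Subgraph)
    (hS : ∀ v u, S.Adj v u ↔ (G.Adj v u ∧
      ∀ M : G.Subgraph, M.IsPerfectMatching → M.Adj v u))
    (hSverts : S.verts = {v | ∃ u, S.Adj v u})
    (q : ℕ) (C : Fin q → G.Subgraph) (w : Fin q → Bool → G.Subgraph)
    -- the cycles are pairwise vertex-disjoint even connected 2-regular subgraphs
    (hCdisj : Pairwise fun j j' => Disjoint (C j).verts (C j').verts)
    (hCconn : ∀ j, (C j).Connected)
    (hCreg : ∀ j, ∀ v ∈ (C j).verts, ((C j).neighborSet v).ncard = 2)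
    (hCeven : ∀ j, Even ((C j).verts.ncard))
    -- the edges of the cycles are exactly the non-special matchable edges
    (hCedges : (⋃ j, (C j).edgeSet) =
      {e ∈ G.edgeSet | (∃ M : G.Subgraph, M.IsPerfectMatching ∧ e ∈ M.edgeSet) ∧
        ¬ (∀ M : G.Subgraph, M.IsPerfectMatching → e ∈ M.edgeSet)})
    -- `w j false`, `w j true` are exactly the two perfect matchings of the cycle `C j`
    (hwle : ∀ j b, w j b ≤ C j)
    (hwpm : ∀ j b, (w j b).verts = (C j).verts ∧ (w j b).IsMatching)
    (hwne : ∀ j, w j false ≠ w j true)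
    (hwall : ∀ j, ∀ M ≤ C j, M.verts = (C j).verts → M.IsMatching →
      M = w j false ∨ M = w j true) :
    Set.BijOn (fun δ : Fin q → Bool => S ⊔ ⨆ j, w j (δ j))
      Set.univ {M : G.Subgraph | M.IsPerfectMatching} := by
  classical
  obtain ⟨M0, hM0⟩ := hpm
  -- S is contained in every perfect matching
  have hSle : ∀ M : G.Subgraph, M.IsPerfectMatching → S ≤ M := by
    intro M hM
    refine ⟨fun v _ => hM.2 v, fun v u h => ((hS v u).1 h).2 M hM⟩
  -- S is a matching
  have hSmatch : S.IsMatching := by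
    intro v hv
    rw [hSverts] at hv
    obtain ⟨u, hu⟩ := hv
    refine ⟨u, hu, fun y hy => ?_⟩
    exact (hM0.1 (hM0.2 v)).unique (((hS v y).1 hy).2 M0 hM0) (((hS v u).1 hu).2 M0 hM0)
  -- cycle vertices are disjoint from S vertices
  have hCS : ∀ j, Disjoint (C j).verts S.verts := by
    intro j
    rw [Set.disjoint_left]
    intro v hvC hvS
    have hne : ((C j).neighborSet v).Nonempty := by
      apply Set.nonempty_of_ncard_ne_zero
      rw [hCreg j v hvC]; norm_num
    obtain ⟨u, hu⟩ := hne
    have hmem : s(v, u) ∈ ⋃ j, (C j).edgeSet := Set.mem_iUnion.2 ⟨j, hu⟩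
    rw [hCedges] at hmem
    obtain ⟨hG, ⟨M, hMpm, hMe⟩, hnall⟩ := hmem
    rw [hSverts] at hvS
    obtain ⟨u', hu'⟩ := hvS
    have h1 : M.Adj v u' := ((hS v u').1 hu').2 M hMpm
    have h2 : M.Adj v u := SimpleGraph.Subgraph.mem_edgeSet.1 hMe
    have : u = u' := (hMpm.1 (hMpm.2 v)).unique h2 h1
    subst this
    exact hnall fun M' hM' => SimpleGraph.Subgraph.mem_edgeSet.2 (((hS v u).1 hu').2 M' hM')
  -- every vertex is covered
  have hcover : ∀ v : V, v ∈ S.verts ∨ ∃ j, v ∈ (C j).verts := by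
    intro v
    obtain ⟨u, hu, -⟩ := hM0.1 (hM0.2 v)
    by_cases hall : ∀ M : G.Subgraph, M.IsPerfectMatching → s(v, u) ∈ M.edgeSet
    · left
      rw [hSverts]
      exact ⟨u, (hS v u).2 ⟨M0.adj_sub hu, fun M hM =>
        SimpleGraph.Subgraph.mem_edgeSet.1 (hall M hM)⟩⟩
    · right
      have hmem : s(v, u) ∈ ⋃ j, (C j).edgeSet := by
        rw [hCedges]
        exact ⟨M0.adj_sub hu, ⟨M0, hM0, SimpleGraph.Subgraph.mem_edgeSet.2 hu⟩, hall⟩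
      obtain ⟨j, hj⟩ := Set.mem_iUnion.1 hmem
      exact ⟨j, (C j).edge_vert (SimpleGraph.Subgraph.mem_edgeSet.1 hj)⟩
  -- forward: each image is a perfect matching
  have key1 : ∀ δ : Fin q → Bool, (S ⊔ ⨆ j, w j (δ j)).IsPerfectMatching := by
    intro δ
    have hadj : ∀ v u, (S ⊔ ⨆ j, w j (δ j)).Adj v u ↔
        S.Adj v u ∨ ∃ j, (w j (δ j)).Adj v u := by
      intro v u
      rw [SimpleGraph.Subgraph.sup_adj, SimpleGraph.Subgraph.iSup_adj]
    constructor
    · -- matching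
      intro v _
      rcases hcover v with hvS | ⟨j, hvC⟩
      · obtain ⟨u, hu, huniq⟩ := hSmatch hvS
        refine ⟨u, (hadj v u).2 (Or.inl hu), fun y hy => ?_⟩
        rcases (hadj v y).1 hy with h | ⟨j, h⟩
        · exact huniq y h
        · have hvCj : v ∈ (C j).verts := by
            have := (w j (δ j)).edge_vert h
            rwa [(hwpm j (δ j)).1] at this
          exact absurd hvS (Set.disjoint_left.1 (hCS j) hvCj)
      · obtain ⟨u, hu, huniq⟩ := (hwpm j (δ j)).2 (((hwpm j (δ j)).1).symm ▸ hvC)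
        refine ⟨u, (hadj v u).2 (Or.inr ⟨j, hu⟩), fun y hy => ?_⟩
        rcases (hadj v y).1 hy with h | ⟨j', h⟩
        · exact absurd (hSverts ▸ (⟨y, h⟩ : ∃ u, S.Adj v u))
            (Set.disjoint_left.1 (hCS j) hvC)
        · have hvC' : v ∈ (C j').verts :=
            (hwpm j' (δ j')).1 ▸ (w j' (δ j')).edge_vert h
          have : j' = j := by
            by_contra hne
            exact Set.disjoint_left.1 (hCdisj hne) hvC' hvC
          subst this
          exact huniq y h
    · -- spanning
      intro v
      rw [SimpleGraph.Subgraph.verts_sup, SimpleGraph.Subgraph.verts_iSup]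
      rcases hcover v with h | ⟨j, h⟩
      · exact Or.inl h
      · exact Or.inr (Set.mem_iUnion.2 ⟨j, ((hwpm j (δ j)).1).symm ▸ h⟩)
  refine ⟨fun δ _ => key1 δ, ?_, ?_⟩
  · -- injective
    intro δ _ δ' _ heq
    simp only at heq
    funext j
    by_contra hne
    -- show w j (δ' j) ≤ w j (δ j) as adjacency, then equal
    have hsub : ∀ v u, (w j (δ' j)).Adj v u → (w j (δ j)).Adj v u := by
      intro v u h
      have hM : (S ⊔ ⨆ i, w i (δ i)).Adj v u := by
        rw [heq]
        exact SimpleGraph.Subgraph.sup_adj.2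
          (Or.inr (SimpleGraph.Subgraph.iSup_adj.2 ⟨j, h⟩))
      have hvC : v ∈ (C j).verts := (hwpm j (δ' j)).1 ▸ (w j (δ' j)).edge_vert h
      rcases SimpleGraph.Subgraph.sup_adj.1 hM with hSadj | hrest
      · exact absurd (hSverts ▸ (⟨u, hSadj⟩ : ∃ u, S.Adj v u))
          (Set.disjoint_left.1 (hCS j) hvC)
      · obtain ⟨j', h'⟩ := SimpleGraph.Subgraph.iSup_adj.1 hrest
        have hvC' : v ∈ (C j').verts :=
          (hwpm j' (δ j')).1 ▸ (w j' (δ j')).edge_vert h'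
        have : j' = j := by
          by_contra hne'
          exact Set.disjoint_left.1 (hCdisj hne') hvC' hvC
        subst this
        exact h'
    have hww : w j (δ j) = w j (δ' j) := by
      apply SimpleGraph.Subgraph.ext
      · rw [(hwpm j (δ j)).1, (hwpm j (δ' j)).1]
      · ext v u
        constructor
        · intro h
          have hv : v ∈ (w j (δ' j)).verts := by
            rw [(hwpm j (δ' j)).1, ← (hwpm j (δ j)).1]
            exact (w j (δ j)).edge_vert h
          obtain ⟨u', hu', huniq⟩ := (hwpm j (δ' j)).2 hv
          have hv2 : v ∈ (w j (δ j)).verts := (w j (δ j)).edge_vert h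
          obtain ⟨u2, hu2, huniq2⟩ := (hwpm j (δ j)).2 hv2
          have : u = u' := (huniq2 u h).trans (huniq2 u' (hsub v u' hu')).symm
          rw [this]; exact hu'
        · exact hsub v u
    rcases Bool.eq_false_or_eq_true (δ j) with h1 | h1 <;>
      rcases Bool.eq_false_or_eq_true (δ' j) with h2 | h2 <;>
        simp_all [hwne j]
    · exact hwne j hww.symm
  · -- surjective
    intro M hM
    simp only [Set.mem_setOf_eq] at hM
    -- restriction of M to each cycle
    have hWverts : ∀ j, (M ⊓ C j).verts = (C j).verts := by
      intro j
      have : (M ⊓ C j).verts = M.verts ∩ (C j).verts := rfl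
      rw [this, hM.2.verts_eq_univ, Set.univ_inter]
    have hWmatch : ∀ j, (M ⊓ C j).IsMatching := by
      intro j v hv
      rw [hWverts j] at hv
      obtain ⟨u, hu, huniq⟩ := hM.1 (hM.2 v)
      have hCadj : (C j).Adj v u := by
        by_cases hall : ∀ M' : G.Subgraph, M'.IsPerfectMatching → s(v, u) ∈ M'.edgeSet
        · exfalso
          have hvS : v ∈ S.verts := by
            rw [hSverts]
            exact ⟨u, (hS v u).2 ⟨M.adj_sub hu, fun M' hM' =>
              SimpleGraph.Subgraph.mem_edgeSet.1 (hall M' hM')⟩⟩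
          exact Set.disjoint_left.1 (hCS j) hv hvS
        · have hmem : s(v, u) ∈ ⋃ i, (C i).edgeSet := by
            rw [hCedges]
            exact ⟨M.adj_sub hu, ⟨M, hM, SimpleGraph.Subgraph.mem_edgeSet.2 hu⟩, hall⟩
          obtain ⟨j', hj'⟩ := Set.mem_iUnion.1 hmem
          have hadj' : (C j').Adj v u := SimpleGraph.Subgraph.mem_edgeSet.1 hj'
          have : j' = j := by
            by_contra hne'
            exact Set.disjoint_left.1 (hCdisj hne') ((C j').edge_vert hadj') hv
          subst this
          exact hadj'
      exact ⟨u, ⟨hu, hCadj⟩, fun y hy => huniq y hy.1⟩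
    -- choose the bit for each cycle
    have hchoice : ∀ j, ∃ b, M ⊓ C j = w j b := by
      intro j
      rcases hwall j (M ⊓ C j) inf_le_right (hWverts j) (hWmatch j) with h | h
      · exact ⟨false, h⟩
      · exact ⟨true, h⟩
    choose δ hδ using hchoice
    refine ⟨δ, Set.mem_univ _, ?_⟩
    simp only
    apply SimpleGraph.Subgraph.ext
    · rw [(key1 δ).2.verts_eq_univ, hM.2.verts_eq_univ]
    · ext v u
      rw [SimpleGraph.Subgraph.sup_adj, SimpleGraph.Subgraph.iSup_adj]
      constructor
      · rintro (h | ⟨j, h⟩)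
        · exact ((hS v u).1 h).2 M hM
        · rw [← hδ j] at h
          exact h.1
      · intro h
        by_cases hall : ∀ M' : G.Subgraph, M'.IsPerfectMatching → s(v, u) ∈ M'.edgeSet
        · exact Or.inl ((hS v u).2 ⟨M.adj_sub h, fun M' hM' =>
            SimpleGraph.Subgraph.mem_edgeSet.1 (hall M' hM')⟩)
        · right
          have hmem : s(v, u) ∈ ⋃ i, (C i).edgeSet := by
            rw [hCedges]
            exact ⟨M.adj_sub h, ⟨M, hM, SimpleGraph.Subgraph.mem_edgeSet.2 h⟩, hall⟩
          obtain ⟨j, hj⟩ := Set.mem_iUnion.1 hmem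
          refine ⟨j, ?_⟩
          rw [← hδ j]
          exact ⟨h, SimpleGraph.Subgraph.mem_edgeSet.1 hj⟩
end
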